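/- The set of solutions (z₁, z₂) ∈ ℝ² with z₁ > 0 and z₂ > 0 of the system 16(z₁ − 1)z₁(z₁ − 3z₂ + 1) = 0 and 16z₂(−3z₁(z₂ − 1) + z₂² − 1) = 0 is exactly {(1, 1), (2, 1), (1, 2), (1/2, 1/2)}. (These four points are the singularities at infinity of the normalized Ricci flow on the generalized Wallach space E₆/SO(8)×U(1)×U(1), corresponding to its four invariant Einstein metrics.) -/
import Mathlib


/-- First polynomial of the compactified normalized Ricci flow at infinity for the
generalized Wallach space E₆/SO(8)×U(1)×U(1). -/
noncomputable def u₁ (z₁ z₂ : ℝ) : ℝ :=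
  16 * (z₁ - 1) * z₁ * (z₁ - 3 * z₂ + 1)

/-- Second polynomial of the compactified normalized Ricci flow at infinity for the
generalized Wallach space E₆/SO(8)×U(1)×U(1). -/
noncomputable def u₂ (z₁ z₂ : ℝ) : ℝ :=
  16 * z₂ * (-3 * z₁ * (z₂ - 1) + z₂ ^ 2 - 1)

theorem wallach_E6_SO8_singularities :
    {p : ℝ × ℝ | 0 < p.1 ∧ 0 < p.2 ∧ u₁ p.1 p.2 = 0 ∧ u₂ p.1 p.2 = 0} =
      {((1 : ℝ), (1 : ℝ)), ((2 : ℝ), (1 : ℝ)), ((1 : ℝ), (2 : ℝ)),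
        ((1 : ℝ) / 2, (1 : ℝ) / 2)} := by
  ext ⟨x, y⟩
  simp only [Set.mem_setOf_eq, Set.mem_insert_iff, Set.mem_singleton_iff, Prod.mk.injEq, u₁, u₂]
  constructor
  · rintro ⟨hx, hy, h1, h2⟩
    have h1' : x = 1 ∨ x - 3 * y + 1 = 0 := by
      rcases mul_eq_zero.mp h1 with h | h
      · rcases mul_eq_zero.mp h with h | h
        · left; linarith [mul_eq_zero.mp h |>.resolve_left (by norm_num)]
        · left; linarith [h]  -- x = 0 contradicts hx
      · right; exact h
    have h2' : y = 1 ∨ y + 1 - 3 * x = 0 := by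
      have : (y - 1) * (y + 1 - 3 * x) = 0 := by nlinarith [mul_eq_zero.mp h2]
      rcases mul_eq_zero.mp this with h | h
      · left; linarith
      · right; exact h
    rcases h1' with h1' | h1' <;> rcases h2' with h2' | h2'
    · left; exact ⟨h1', h2'⟩
    · right; right; left; constructor <;> linarith
    · right; left; constructor <;> linarith
    · right; right; right; constructor <;> linarith
  · rintro (⟨rfl, rfl⟩ | ⟨rfl, rfl⟩ | ⟨rfl, rfl⟩ | ⟨rfl, rfl⟩) <;> norm_num
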